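/- Let G_c be the universal comparison graph of the lattice graph (ℤ², ℓ¹) and identify the vertices of ℤ² with ℕ_{≥1} via the spiral labelling. For every edge (i, j) of the lattice graph with spiral labels i < j, the path Ψ(i,j) has length at most 4; equivalently, the smallest integer k such that k ≥ j and i lies on the path in G_c from 1 to k satisfies d_{G_c}(i, k) ≤ 4. -/

import Mathlib

/-!
Write `L n = n + ∂_V^n` (with `L 0 = 1`). When `∂_V` is nondecreasing, `L` is strictly
increasing, the children of `a` in `G_c` are the `b` with `L (a - 1) < b ≤ L a`, and the parent
map `b ↦ min {a | b ≤ L a}` is the lower adjoint of `L`. Iterating the Galois connection, the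
descendants of `i` at depth `t` form the interval `(L^t (i - 1), L^t i]`, so the least `k ≥ j`
below `i` sits at the first depth `t` with `j ≤ L^t i`, and it suffices to show `j ≤ L^4 i`.

In `ℤ²`, a finite set meets at most `|∂X| / 2` rows and at most `|∂X| / 2` columns, so
`|∂X|² ≥ 4 |X|` and each application of `L` adds at least `2 √n`; removing an extreme point
shows that `∂_V` is nondecreasing. On the other side, the spiral point with label `a` on the ring
`max |x| |y| = r` has `a ≥ (2r - 1)²`, and a lattice neighbour of it has label at most
`a + 8r + 7`; four steps of `L` beat this.
-/

open scoped ENNReal Classical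

noncomputable section

/-- A function on a countable vertex set *vanishes at infinity* if every
super-level set `{x : t < |f x|}` with `t > 0` is finite. -/
def VanishesAtInfinity {V : Type*} (f : V → ℝ) : Prop :=
  ∀ t : ℝ, 0 < t → {x : V | t < |f x|}.Finite

/-- The `k`-th largest value (k ≥ 1, counted with multiplicity) assumed by `|f|`. -/
def kthLargest {V : Type*} (f : V → ℝ) (k : ℕ) : ℝ :=
  sInf {t : ℝ | 0 ≤ t ∧ {x : V | t < |f x|}.Finite ∧ {x : V | t < |f x|}.ncard < k}

/-- The rearrangement of `f` with respect to the labelling `η`, where `η n` is the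
vertex carrying label `n + 1`:  `f*(η (k-1)) = k`-th largest value of `|f|`. -/
def rearrangementOf {V : Type*} (η : ℕ → V) (f : V → ℝ) : V → ℝ :=
  fun v => kthLargest f (Function.invFun η v + 1)

/-- `‖∇f‖_p^p = Σ_{x∼y} |f x - f y|^p`, each edge counted once (value in `ℝ≥0∞`). -/
def gradPPow {V : Type*} (G : SimpleGraph V) (f : V → ℝ) (p : ℝ) : ℝ≥0∞ :=
  ∑' e : G.edgeSet, Sym2.lift
    ⟨fun x y => ENNReal.ofReal (|f x - f y| ^ p), fun x y => by dsimp only; rw [abs_sub_comm]⟩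
    (e : Sym2 V)

/-- `‖∇f‖_p = (Σ_{x∼y} |f x - f y|^p)^{1/p}` (value in `ℝ≥0∞`). -/
def gradP {V : Type*} (G : SimpleGraph V) (f : V → ℝ) (p : ℝ) : ℝ≥0∞ :=
  gradPPow G f p ^ (1 / p)

/-- `‖∇f‖_∞ = sup_{x∼y} |f x - f y|` (value in `ℝ≥0∞`). -/
def gradTop {V : Type*} (G : SimpleGraph V) (f : V → ℝ) : ℝ≥0∞ :=
  ⨆ e : G.edgeSet, Sym2.lift
    ⟨fun x y => ENNReal.ofReal |f x - f y|, fun x y => by dsimp only; rw [abs_sub_comm]⟩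
    (e : Sym2 V)

/-- The vertex boundary `∂_V(X)` of a set of vertices. -/
def vertexBoundary {V : Type*} (G : SimpleGraph V) (X : Set V) : Set V :=
  {z : V | z ∉ X ∧ ∃ x ∈ X, G.Adj z x}

/-- The isoperimetric number `∂_V^n`: the least vertex-perimeter among sets of `n` vertices. -/
def isoNum {V : Type*} (G : SimpleGraph V) (n : ℕ) : ℕ :=
  sInf {m : ℕ | ∃ X : Set V, X.Finite ∧ X.ncard = n ∧
    (vertexBoundary G X).Finite ∧ (vertexBoundary G X).ncard = m}

/-- `∂_V^n` with the convention `∂_V^0 = 1`. -/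
def isoNum₀ {V : Type*} (G : SimpleGraph V) (n : ℕ) : ℕ :=
  if n = 0 then 1 else isoNum G n

/-- `b` is a neighbour of `a` larger than `a` in the universal comparison graph:
`(a-1) + ∂_V^{a-1} < b ≤ a + ∂_V^a`. -/
def cAdj {V : Type*} (G : SimpleGraph V) (a b : ℕ+) : Prop :=
  a < b ∧ (a : ℕ) - 1 + isoNum₀ G ((a : ℕ) - 1) < (b : ℕ) ∧
    (b : ℕ) ≤ (a : ℕ) + isoNum G (a : ℕ)

/-- The universal comparison graph `G_c` of `G`, a graph on the positive integers. -/
def comparisonGraph {V : Type*} (G : SimpleGraph V) : SimpleGraph ℕ+ where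
  Adj a b := cAdj G a b ∨ cAdj G b a
  symm := ⟨fun a b h => h.symm⟩
  loopless := ⟨fun a h => by
    rcases h with h | h <;> exact absurd h.1 (lt_irrefl a)⟩

/-- The lattice graph `(ℤ², ℓ¹)`. -/
def latticeZ2 : SimpleGraph (ℤ × ℤ) where
  Adj x y := |x.1 - y.1| + |x.2 - y.2| = 1
  symm := by
    constructor; intro x y h; try beta_reduce at h ⊢
    rw [abs_sub_comm y.1 x.1, abs_sub_comm y.2 x.2]
    exact h
  loopless := by constructor; intro x h; simp at h

/-- The lattice graph `(ℤ^d, ℓ¹)`. -/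
def latticeZd (d : ℕ) : SimpleGraph (Fin d → ℤ) where
  Adj x y := (∑ i, |x i - y i|) = 1
  symm := by
    constructor; intro x y h
    have : ∀ i, |y i - x i| = |x i - y i| := fun i => abs_sub_comm _ _
    simpa [this] using h
  loopless := by constructor; intro x h; simp at h

/-- `ℓ¹`-norm on `ℤ²`. -/
def l1 (x : ℤ × ℤ) : ℤ := |x.1| + |x.2|

/-- One step of the counterclockwise square spiral on `ℤ²`. -/
def spiralNext : ℤ × ℤ → ℤ × ℤ := fun p =>
  if p.1 = 0 ∧ p.2 = 0 then (1, 0)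
  else if p.2 < 0 ∧ |p.1| ≤ -p.2 then (p.1 + 1, p.2)
  else if 0 < p.1 ∧ |p.2| < p.1 then (p.1, p.2 + 1)
  else if 0 < p.2 ∧ p.1 ≤ p.2 ∧ -p.1 < p.2 then (p.1 - 1, p.2)
  else (p.1, p.2 - 1)
/-- The spiral labelling of `ℤ²` (0-indexed): `spiral (k-1)` is the vertex with
spiral label `k`, so `spiral 0 = (0,0)`, `spiral 1 = (1,0)`, `spiral 2 = (1,1)`, … -/
def spiral : ℕ → ℤ × ℤ := fun n => spiralNext^[n] (0, 0)

/-- The universal comparison graph of the lattice graph `(ℤ², ℓ¹)`. -/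
def GcZ2 : SimpleGraph ℕ+ := comparisonGraph latticeZ2

/-- `i` lies on the path from `1` to `k` in the tree `G_c`. -/
def liesOnPathFromOne (i k : ℕ+) : Prop :=
  GcZ2.dist 1 i + GcZ2.dist i k = GcZ2.dist 1 k

section ComparisonTree

variable {V : Type*} {G : SimpleGraph V}

/-- The children of `a ≥ 1` in `G_c` are the `b` with
`lastChild G (a - 1) < b ≤ lastChild G a`. -/
def lastChild (G : SimpleGraph V) (n : ℕ) : ℕ := n + isoNum₀ G n

def parent (G : SimpleGraph V) (b : ℕ) : ℕ := sInf {a | b ≤ lastChild G a}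

theorem lastChild_zero : lastChild G 0 = 1 := rfl

theorem lastChild_of_pos {n : ℕ} (hn : 0 < n) : lastChild G n = n + isoNum G n := by
  simp [lastChild, isoNum₀, hn.ne']

theorem lt_lastChild (hG : StrictMono (lastChild G)) (n : ℕ) : n < lastChild G n := by
  simpa [lastChild_zero] using hG.add_le_nat n 0

theorem gc_parent_lastChild (hG : StrictMono (lastChild G)) :
    GaloisConnection (parent G) (lastChild G) := fun b _ =>
  ⟨fun h => (Nat.sInf_mem (s := {a | b ≤ lastChild G a}) ⟨b, (lt_lastChild hG b).le⟩).trans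
      (hG.monotone h),
    fun h => Nat.sInf_le h⟩

theorem gc_iterate_parent_lastChild (hG : StrictMono (lastChild G)) (t : ℕ) :
    GaloisConnection (parent G)^[t] (lastChild G)^[t] := by
  induction t with
  | zero => exact GaloisConnection.id
  | succ t ih =>
    rw [Function.iterate_succ, Function.iterate_succ']
    exact (gc_parent_lastChild hG).compose ih

theorem iterate_parent_eq_iff (hG : StrictMono (lastChild G)) {t i k : ℕ} (hi : 0 < i) :
    (parent G)^[t] k = i ↔
      (lastChild G)^[t] (i - 1) < k ∧ k ≤ (lastChild G)^[t] i := by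
  have gc := gc_iterate_parent_lastChild hG t
  rw [← gc.le_iff_le, ← gc.lt_iff_lt]
  omega

theorem parent_eq_iff (hG : StrictMono (lastChild G)) {a b : ℕ} (ha : 0 < a) :
    parent G b = a ↔ lastChild G (a - 1) < b ∧ b ≤ lastChild G a :=
  iterate_parent_eq_iff hG (t := 1) ha

theorem iterate_lastChild_le_iterate_pred (hG : StrictMono (lastChild G)) {t t' i : ℕ}
    (hi : 0 < i) (h : t < t') : (lastChild G)^[t] i ≤ (lastChild G)^[t'] (i - 1) := calc
  (lastChild G)^[t] i ≤ (lastChild G)^[t] (lastChild G (i - 1)) :=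
      hG.monotone.iterate t (by have := lt_lastChild hG (i - 1); omega)
  _ = (lastChild G)^[t + 1] (i - 1) := (Function.iterate_succ_apply ..).symm
  _ ≤ (lastChild G)^[t'] (i - 1) :=
      Function.monotone_iterate_of_id_le (fun n => (lt_lastChild hG n).le) h _

theorem parent_lt (hG : StrictMono (lastChild G)) {b : ℕ} (hb : 1 < b) : parent G b < b := by
  have := (gc_parent_lastChild hG).lt_iff_lt (a := b) (b := b - 1)
  have := lt_lastChild hG (b - 1)
  omega

theorem parent_pos (hG : StrictMono (lastChild G)) {b : ℕ} (hb : 1 < b) : 0 < parent G b :=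
  (gc_parent_lastChild hG).lt_iff_lt.mpr hb

theorem comparisonGraph_adj_iff (hG : StrictMono (lastChild G)) {a b : ℕ+} :
    (comparisonGraph G).Adj a b ↔ parent G b = a ∨ parent G a = b := by
  have cAdj_iff : ∀ x y : ℕ+, cAdj G x y ↔ parent G y = x := fun x y => by
    have := lt_lastChild hG (x - 1)
    rw [parent_eq_iff hG x.pos, lastChild_of_pos x.pos]
    exact ⟨fun h => h.2, fun h => ⟨PNat.coe_lt_coe _ _ |>.mp (by omega), h⟩⟩
  exact or_congr (cAdj_iff a b) (cAdj_iff b a)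

theorem one_lt_of_iterate_parent_eq (hG : StrictMono (lastChild G)) {t i k : ℕ} (hi : 0 < i)
    (h : (parent G)^[t + 1] k = i) : 1 < k := by
  have hk := ((iterate_parent_eq_iff hG hi).mp h).1
  rw [Function.iterate_succ_apply'] at hk
  have := lt_lastChild hG ((lastChild G)^[t] (i - 1))
  omega

/-- The guard `parent G b < b` always holds when `lastChild G` is strictly monotone; it only
makes the recursion well founded. -/
def depth (G : SimpleGraph V) (b : ℕ) : ℕ :=
  if h : 1 < b ∧ parent G b < b then depth G (parent G b) + 1 else 0
termination_by b
decreasing_by exact h.2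

theorem depth_one : depth G 1 = 0 := by
  rw [depth, dif_neg (by omega)]

theorem depth_of_one_lt (hG : StrictMono (lastChild G)) {b : ℕ} (hb : 1 < b) :
    depth G b = depth G (parent G b) + 1 := by
  rw [depth, dif_pos ⟨hb, parent_lt hG hb⟩]

theorem depth_of_iterate_parent_eq (hG : StrictMono (lastChild G)) {t i k : ℕ} (hi : 0 < i)
    (h : (parent G)^[t] k = i) : depth G k = depth G i + t := by
  induction t generalizing k with
  | zero => simp_all
  | succ t ih =>
    rw [depth_of_one_lt hG (one_lt_of_iterate_parent_eq hG hi h), ih h, add_assoc]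

theorem iterate_parent_depth (hG : StrictMono (lastChild G)) {b : ℕ} (hb : 0 < b) :
    (parent G)^[depth G b] b = 1 := by
  induction b using Nat.strong_induction_on with
  | _ b ih =>
    rcases (by omega : b = 1 ∨ 1 < b) with rfl | hb1
    · rw [depth_one]; rfl
    · rw [depth_of_one_lt hG hb1, Function.iterate_succ_apply]
      exact ih _ (parent_lt hG hb1) (parent_pos hG hb1)

theorem depth_step_of_adj (hG : StrictMono (lastChild G)) {a b : ℕ+}
    (h : (comparisonGraph G).Adj a b) :
    (parent G b = a ∧ depth G b = depth G a + 1) ∨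
      (parent G a = b ∧ depth G a = depth G b + 1) := by
  have step : ∀ x y : ℕ+, parent G y = x → depth G y = depth G x + 1 := fun x y hxy =>
    depth_of_iterate_parent_eq hG (t := 1) x.pos hxy
  rcases (comparisonGraph_adj_iff hG).mp h with h | h
  · exact Or.inl ⟨h, step a b h⟩
  · exact Or.inr ⟨h, step b a h⟩

theorem depth_le_of_walk (hG : StrictMono (lastChild G)) {a b : ℕ+}
    (w : (comparisonGraph G).Walk a b) : depth G b ≤ depth G a + w.length := by
  induction w with
  | nil => simp
  | cons h _ ih =>
    rw [SimpleGraph.Walk.length_cons]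
    rcases depth_step_of_adj hG h with ⟨-, h⟩ | ⟨-, h⟩ <;> omega

theorem iterate_parent_of_walk (hG : StrictMono (lastChild G)) {a b : ℕ+}
    (w : (comparisonGraph G).Walk a b) (h : depth G b = depth G a + w.length) :
    (parent G)^[w.length] b = a := by
  induction w with
  | nil => rfl
  | cons hadj w ih =>
    rw [SimpleGraph.Walk.length_cons] at h ⊢
    have := depth_le_of_walk hG w
    rcases depth_step_of_adj hG hadj with ⟨hp, hd⟩ | ⟨-, hd⟩
    · rw [Function.iterate_succ_apply', ih (by omega), hp]
    · omega

theorem exists_walk_of_iterate_parent (hG : StrictMono (lastChild G)) {t : ℕ} {i k : ℕ+}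
    (h : (parent G)^[t] k = i) : ∃ w : (comparisonGraph G).Walk k i, w.length = t := by
  induction t generalizing k with
  | zero =>
    obtain rfl : k = i := PNat.coe_inj.mp h
    exact ⟨.nil, rfl⟩
  | succ t ih =>
    have hk := one_lt_of_iterate_parent_eq hG i.pos h
    let p : ℕ+ := ⟨parent G k, parent_pos hG hk⟩
    obtain ⟨w, hw⟩ := ih (k := p) h
    have hadj : (comparisonGraph G).Adj k p := (comparisonGraph_adj_iff hG).mpr (Or.inr rfl)
    exact ⟨.cons hadj w, by rw [SimpleGraph.Walk.length_cons, hw]⟩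

theorem dist_eq_of_iterate_parent (hG : StrictMono (lastChild G)) {t : ℕ} {i k : ℕ+}
    (h : (parent G)^[t] k = i) : (comparisonGraph G).dist i k = t := by
  obtain ⟨w, hw⟩ := exists_walk_of_iterate_parent hG h
  obtain ⟨w', hw'⟩ := w.reverse.reachable.exists_walk_length_eq_dist
  have := depth_le_of_walk hG w'
  have := depth_of_iterate_parent_eq hG i.pos h
  have := SimpleGraph.dist_le w.reverse
  rw [SimpleGraph.Walk.length_reverse] at this
  omega

theorem dist_one_eq_depth (hG : StrictMono (lastChild G)) (b : ℕ+) :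
    (comparisonGraph G).dist 1 b = depth G b :=
  dist_eq_of_iterate_parent hG (iterate_parent_depth hG b.pos)

theorem comparisonGraph_connected (hG : StrictMono (lastChild G)) :
    (comparisonGraph G).Connected := by
  have toOne : ∀ b : ℕ+, (comparisonGraph G).Reachable b 1 := fun b =>
    (exists_walk_of_iterate_parent hG (iterate_parent_depth hG b.pos)).elim
      fun w _ => w.reachable
  exact .mk fun a b => (toOne a).trans (toOne b).symm

theorem dist_one_add_dist_eq_iff (hG : StrictMono (lastChild G)) {i k : ℕ+} :
    (comparisonGraph G).dist 1 i + (comparisonGraph G).dist i k = (comparisonGraph G).dist 1 k ↔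
      ∃ t, (parent G)^[t] k = i := by
  rw [dist_one_eq_depth hG, dist_one_eq_depth hG]
  constructor
  · intro h
    obtain ⟨w, hw⟩ := (comparisonGraph_connected hG).exists_walk_length_eq_dist i k
    exact ⟨_, iterate_parent_of_walk hG w (by omega)⟩
  · rintro ⟨t, h⟩
    rw [dist_eq_of_iterate_parent hG h, depth_of_iterate_parent_eq hG i.pos h]

theorem exists_isLeast_descendant_dist_le (hG : StrictMono (lastChild G)) {i j : ℕ+} {s : ℕ}
    (hs : (j : ℕ) ≤ (lastChild G)^[s] i) :
    ∃ k : ℕ+, IsLeast {k' : ℕ+ | j ≤ k' ∧ (comparisonGraph G).dist 1 i +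
        (comparisonGraph G).dist i k' = (comparisonGraph G).dist 1 k'} k ∧
      (comparisonGraph G).dist i k ≤ s := by
  classical
  have hex : ∃ t, (j : ℕ) ≤ (lastChild G)^[t] i := ⟨s, hs⟩
  set t := Nat.find hex
  -- the least descendant of `i` at the first depth `t` whose generation reaches `j`;
  -- deeper generations lie entirely above generation `t`
  let k : ℕ+ := ⟨max j ((lastChild G)^[t] (i - 1) + 1), by positivity⟩
  have hgen : (lastChild G)^[t] (i - 1) < (lastChild G)^[t] i := hG.iterate t (by simp)
  have hk : (parent G)^[t] k = i := (iterate_parent_eq_iff hG i.pos).mpr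
    ⟨lt_max_of_lt_right (Nat.lt_succ_self _), max_le (Nat.find_spec hex) hgen⟩
  refine ⟨k, ⟨⟨(le_max_left (j : ℕ) _ : (j : ℕ) ≤ k),
    (dist_one_add_dist_eq_iff hG).mpr ⟨t, hk⟩⟩, ?_⟩, ?_⟩
  · rintro k' ⟨hjk' : (j : ℕ) ≤ k', hk'⟩
    obtain ⟨t', ht'⟩ := (dist_one_add_dist_eq_iff hG).mp hk'
    obtain ⟨hlo, hhi⟩ := (iterate_parent_eq_iff hG i.pos).mp ht'
    have htt' : t ≤ t' := Nat.find_min' hex (hjk'.trans hhi)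
    show max (j : ℕ) _ ≤ k'
    rcases htt'.eq_or_lt with rfl | hlt
    · exact max_le hjk' hlo
    · have := iterate_lastChild_le_iterate_pred hG i.pos hlt
      exact max_le (by omega) (by omega)
  · rw [dist_eq_of_iterate_parent hG hk]
    exact Nat.find_min' hex hs

end ComparisonTree

theorem latticeZ2_adj_iff {p q : ℤ × ℤ} : latticeZ2.Adj p q ↔
    q = (p.1 + 1, p.2) ∨ q = (p.1 - 1, p.2) ∨ q = (p.1, p.2 + 1) ∨ q = (p.1, p.2 - 1) := by
  obtain ⟨x, y⟩ := p
  obtain ⟨a, b⟩ := q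
  change |x - a| + |y - b| = 1 ↔ _
  simp only [Prod.mk.injEq]
  constructor
  · intro h
    rcases abs_cases (x - a) with ⟨h1, _⟩ | ⟨h1, _⟩ <;>
      rcases abs_cases (y - b) with ⟨h2, _⟩ | ⟨h2, _⟩ <;> omega
  · rintro (⟨rfl, rfl⟩ | ⟨rfl, rfl⟩ | ⟨rfl, rfl⟩ | ⟨rfl, rfl⟩) <;> simp

open Set in
theorem vertexBoundary_latticeZ2_finite {X : Set (ℤ × ℤ)} (hX : X.Finite) :
    (vertexBoundary latticeZ2 X).Finite := by
  let nbrs : ℤ × ℤ → Set (ℤ × ℤ) := fun x =>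
    {(x.1 + 1, x.2), (x.1 - 1, x.2), (x.1, x.2 + 1), (x.1, x.2 - 1)}
  refine (hX.biUnion fun x _ => toFinite (nbrs x)).subset ?_
  rintro z ⟨-, x, hx, hzx⟩
  refine mem_biUnion hx ?_
  simpa [nbrs] using latticeZ2_adj_iff.mp hzx.symm

open Set in
theorem two_mul_ncard_rows_le {X : Set (ℤ × ℤ)} (hX : X.Finite) :
    2 * (Prod.snd '' X).ncard ≤ (vertexBoundary latticeZ2 X).ncard := by
  let row : ℤ → Set ℤ := fun y => {a | (a, y) ∈ X}
  have hrow : ∀ y, (row y).Finite := fun y =>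
    hX.preimage fun a _ b _ h => congrArg Prod.fst h
  have hne : ∀ y ∈ Prod.snd '' X, (row y).Nonempty := by
    rintro _ ⟨p, hp, rfl⟩
    exact ⟨p.1, hp⟩
  -- the points just right of the last and just left of the first point of each row
  let f : ℤ × Bool → ℤ × ℤ := fun yb =>
    (if yb.2 then sSup (row yb.1) + 1 else sInf (row yb.1) - 1, yb.1)
  have hf :
      ∀ yb ∈ (Prod.snd '' X) ×ˢ (univ : Set Bool), f yb ∈ vertexBoundary latticeZ2 X := by
    rintro ⟨y, _ | _⟩ ⟨hy, -⟩
    · refine ⟨fun h => ?_, _, (hne y hy).csInf_mem (hrow y), latticeZ2_adj_iff.mpr ?_⟩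
      · have : sInf (row y) ≤ sInf (row y) - 1 := csInf_le (hrow y).bddBelow h
        omega
      · simp [f]
    · refine ⟨fun h => ?_, _, (hne y hy).csSup_mem (hrow y), latticeZ2_adj_iff.mpr ?_⟩
      · have : sSup (row y) + 1 ≤ sSup (row y) := le_csSup (hrow y).bddAbove h
        omega
      · simp [f]
  have hinj : InjOn f ((Prod.snd '' X) ×ˢ (univ : Set Bool)) := by
    rintro ⟨y, b⟩ ⟨hy, -⟩ ⟨y', b'⟩ - h
    obtain rfl : y = y' := congrArg Prod.snd h
    have := csInf_le_csSup (hne y hy) (hrow y).bddBelow (hrow y).bddAbove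
    cases b <;> cases b' <;> simp [f] at h ⊢ <;> omega
  calc 2 * (Prod.snd '' X).ncard = ((Prod.snd '' X) ×ˢ (univ : Set Bool)).ncard := by
        rw [ncard_prod, ncard_univ, Nat.card_eq_fintype_card, Fintype.card_bool, mul_comm]
    _ ≤ _ := ncard_le_ncard_of_injOn f hf hinj (vertexBoundary_latticeZ2_finite hX)

theorem latticeZ2_adj_swap {p q : ℤ × ℤ} : latticeZ2.Adj p.swap q.swap ↔ latticeZ2.Adj p q :=
  show _ + _ = (1 : ℤ) ↔ _ + _ = (1 : ℤ) by rw [add_comm]; rfl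

theorem vertexBoundary_latticeZ2_image_swap (X : Set (ℤ × ℤ)) :
    vertexBoundary latticeZ2 (Prod.swap '' X) = Prod.swap '' vertexBoundary latticeZ2 X := by
  ext z
  simp only [Set.image_swap_eq_preimage_swap, Set.mem_preimage, vertexBoundary,
    Set.mem_ofPred_eq]
  exact and_congr_right fun _ =>
    ⟨fun ⟨x, hx, h⟩ => ⟨x.swap, hx, latticeZ2_adj_swap.mpr h⟩, fun ⟨x, hx, h⟩ =>
      ⟨x.swap, by rwa [Prod.swap_swap], latticeZ2_adj_swap.mp (by rwa [Prod.swap_swap])⟩⟩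

theorem two_mul_ncard_cols_le {X : Set (ℤ × ℤ)} (hX : X.Finite) :
    2 * (Prod.fst '' X).ncard ≤ (vertexBoundary latticeZ2 X).ncard := by
  have := two_mul_ncard_rows_le (hX.image Prod.swap)
  rwa [vertexBoundary_latticeZ2_image_swap, Set.ncard_image_of_injective _ Prod.swap_injective,
    Set.image_image, Set.image_congr' fun p => Prod.snd_swap] at this

theorem four_mul_ncard_le_sq_ncard_vertexBoundary {X : Set (ℤ × ℤ)} (hX : X.Finite) :
    4 * X.ncard ≤ (vertexBoundary latticeZ2 X).ncard ^ 2 := by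
  have hprod : X.ncard ≤ (Prod.fst '' X).ncard * (Prod.snd '' X).ncard := by
    rw [← Set.ncard_prod]
    exact Set.ncard_le_ncard (fun p hp => ⟨⟨p, hp, rfl⟩, p, hp, rfl⟩)
      ((hX.image _).prod (hX.image _))
  have := two_mul_ncard_cols_le hX
  have := two_mul_ncard_rows_le hX
  nlinarith

theorem exists_ncard_vertexBoundary_eq_isoNum (n : ℕ) :
    ∃ X : Set (ℤ × ℤ), X.Finite ∧ X.ncard = n ∧
      (vertexBoundary latticeZ2 X).ncard = isoNum latticeZ2 n := by
  obtain ⟨X, -, hX, hn⟩ := (Set.infinite_univ (α := ℤ × ℤ)).exists_subset_ncard_eq n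
  have hne : {m | ∃ X : Set (ℤ × ℤ), X.Finite ∧ X.ncard = n ∧
      (vertexBoundary latticeZ2 X).Finite ∧ (vertexBoundary latticeZ2 X).ncard = m}.Nonempty :=
    ⟨_, X, hX, hn, vertexBoundary_latticeZ2_finite hX, rfl⟩
  obtain ⟨Y, hY, hYn, -, hYB⟩ := Nat.sInf_mem hne
  exact ⟨Y, hY, hYn, hYB⟩

theorem isoNum_latticeZ2_le {X : Set (ℤ × ℤ)} (hX : X.Finite) :
    isoNum latticeZ2 X.ncard ≤ (vertexBoundary latticeZ2 X).ncard :=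
  Nat.sInf_le ⟨X, hX, rfl, vertexBoundary_latticeZ2_finite hX, rfl⟩

theorem four_mul_le_sq_isoNum_latticeZ2 (n : ℕ) : 4 * n ≤ isoNum latticeZ2 n ^ 2 := by
  obtain ⟨X, hX, rfl, hB⟩ := exists_ncard_vertexBoundary_eq_isoNum n
  exact hB ▸ four_mul_ncard_le_sq_ncard_vertexBoundary hX

theorem isoNum_latticeZ2_le_succ (n : ℕ) : isoNum latticeZ2 n ≤ isoNum latticeZ2 (n + 1) := by
  obtain ⟨X, hX, hXn, hB⟩ := exists_ncard_vertexBoundary_eq_isoNum (n + 1)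
  -- Remove a point `x` maximising `2 p.1 + p.2`: the only neighbour in `X` of its right
  -- neighbour `w` is `x`, so `w` leaves the boundary as `x` enters it.
  obtain ⟨x, hx, hmax⟩ := Set.exists_max_image X (fun p : ℤ × ℤ => 2 * p.1 + p.2) hX
    (Set.nonempty_of_ncard_ne_zero (by omega))
  set w : ℤ × ℤ := (x.1 + 1, x.2)
  have hw : w ∈ vertexBoundary latticeZ2 X :=
    ⟨fun h => by have := hmax w h; simp only [w] at this; omega, x, hx,
      latticeZ2_adj_iff.mpr (by simp [w])⟩
  have hsub :
      vertexBoundary latticeZ2 (X \ {x}) ⊆ insert x (vertexBoundary latticeZ2 X \ {w}) := by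
    rintro z ⟨hz, y, ⟨hy, hyx⟩, hzy⟩
    by_cases hzx : z = x
    · exact Or.inl hzx
    refine Or.inr ⟨⟨fun h => hz ⟨h, hzx⟩, y, hy, hzy⟩, ?_⟩
    rintro rfl
    have := hmax y hy
    rcases latticeZ2_adj_iff.mp hzy with rfl | rfl | rfl | rfl <;>
      simp [w, Prod.ext_iff] at this hyx <;> omega
  have hBfin := vertexBoundary_latticeZ2_finite hX
  calc isoNum latticeZ2 n = isoNum latticeZ2 (X \ {x}).ncard := by
        rw [Set.ncard_sdiff_singleton_of_mem hx, hXn, Nat.add_sub_cancel]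
    _ ≤ (vertexBoundary latticeZ2 (X \ {x})).ncard := isoNum_latticeZ2_le hX.sdiff
    _ ≤ (insert x (vertexBoundary latticeZ2 X \ {w})).ncard :=
        Set.ncard_le_ncard hsub (hBfin.sdiff.insert x)
    _ ≤ (vertexBoundary latticeZ2 X \ {w}).ncard + 1 := Set.ncard_insert_le _ _
    _ = isoNum latticeZ2 (n + 1) := by rw [Set.ncard_sdiff_singleton_add_one hw hBfin, hB]

theorem strictMono_lastChild_latticeZ2 : StrictMono (lastChild latticeZ2) := by
  refine strictMono_nat_of_lt_succ fun n => ?_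
  rw [lastChild_of_pos (by omega : 0 < n + 1)]
  rcases n.eq_zero_or_pos with rfl | hn
  · have := four_mul_le_sq_isoNum_latticeZ2 1
    rw [lastChild_zero]
    nlinarith
  · rw [lastChild_of_pos hn]
    have := isoNum_latticeZ2_le_succ n
    omega

/-- The inverse of `spiral`: the ring `max |x| |y| = r ≥ 1` is traversed counterclockwise after
the `(2r - 1)²` points of the inner rings, starting just above its corner `(r, -r)`. -/
def spiralIndex : ℤ × ℤ → ℤ
  | (x, y) =>
    if 1 ≤ x ∧ -x < y ∧ y ≤ x then (2 * x - 1) ^ 2 + (x + y - 1)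
    else if 1 ≤ y ∧ -y ≤ x ∧ x < y then (2 * y - 1) ^ 2 + (3 * y - 1 - x)
    else if x ≤ -1 ∧ x ≤ y ∧ y < -x then (2 * x + 1) ^ 2 + (-5 * x - 1 - y)
    else if y ≤ -1 ∧ y < x ∧ x ≤ -y then (2 * y + 1) ^ 2 + (x - 7 * y - 1)
    else 0

theorem spiralIndex_spiralNext (p : ℤ × ℤ) :
    spiralIndex (spiralNext p) = spiralIndex p + 1 := by
  obtain ⟨x, y⟩ := p
  simp only [spiralNext, abs_le, abs_lt]
  -- `x = -y` at the two corners where the step leaves the branch of the formula diagonally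
  split_ifs <;> simp only [spiralIndex] <;> split_ifs <;>
    first
    | grind
    | (obtain rfl : x = -y := (by omega); ring)

theorem spiralIndex_le_of_adj {p q : ℤ × ℤ} (h : latticeZ2.Adj p q) {r : ℤ}
    (hx : |p.1| ≤ r) (hy : |p.2| ≤ r) :
    spiralIndex q ≤ spiralIndex p + 8 * r + 7 := by
  obtain ⟨x, y⟩ := p
  rw [abs_le] at hx hy
  rcases latticeZ2_adj_iff.mp h with rfl | rfl | rfl | rfl <;>
  simp only [spiralIndex] <;> split_ifs <;>
    first
    | omega
    | nlinarith
    | (obtain ⟨rfl, rfl⟩ : x = 0 ∧ y = 0 := (by omega)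
       norm_num
       omega)

theorem sq_le_spiralIndex {p : ℤ × ℤ} (hp : 1 ≤ max |p.1| |p.2|) :
    (2 * max |p.1| |p.2| - 1) ^ 2 ≤ spiralIndex p := by
  obtain ⟨x, y⟩ := p
  dsimp only at hp ⊢
  simp only [spiralIndex]
  rcases max_cases |x| |y| with ⟨hr, hxy⟩ | ⟨hr, hxy⟩ <;> rw [hr] at hp ⊢ <;>
    rcases abs_cases x with ⟨hx, _⟩ | ⟨hx, _⟩ <;>
    rcases abs_cases y with ⟨hy, _⟩ | ⟨hy, _⟩ <;>
    simp only [hx, hy] at hp hxy ⊢ <;> split_ifs <;> first | omega | nlinarith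

theorem spiralIndex_spiral (n : ℕ) : spiralIndex (spiral n) = n := by
  induction n with
  | zero => rfl
  | succ n ih =>
    rw [spiral, Function.iterate_succ_apply', ← spiral, spiralIndex_spiralNext, ih]
    push_cast
    rfl

theorem iterate_lastChild_latticeZ2_ge (t : ℕ) {n : ℕ} (hn : 0 < n) :
    n + t * isoNum latticeZ2 n ≤ (lastChild latticeZ2)^[t] n := by
  induction t with
  | zero => simp
  | succ t ih =>
    rw [Function.iterate_succ_apply', lastChild_of_pos (by omega)]
    have := monotone_nat_of_le_succ isoNum_latticeZ2_le_succ
      (show n ≤ (lastChild latticeZ2)^[t] n by omega)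
    nlinarith

theorem succ_le_iterate_lastChild_of_adj {a b : ℕ} (h : latticeZ2.Adj (spiral a) (spiral b)) :
    b + 1 ≤ (lastChild latticeZ2)^[4] (a + 1) := by
  set r := max |(spiral a).1| |(spiral a).2|
  have hb : (b : ℤ) ≤ a + 8 * r + 7 := by
    simpa only [spiralIndex_spiral] using
      spiralIndex_le_of_adj h (le_max_left _ _) (le_max_right _ _)
  set d := isoNum latticeZ2 (a + 1)
  set d' := isoNum latticeZ2 (a + 1 + d)
  have hd : 4 * (a + 1) ≤ d ^ 2 := four_mul_le_sq_isoNum_latticeZ2 _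
  have hd' : 4 * (a + 1 + d) ≤ d' ^ 2 := four_mul_le_sq_isoNum_latticeZ2 _
  have hL : a + 1 + d + 3 * d' ≤ (lastChild latticeZ2)^[4] (a + 1) := by
    have := iterate_lastChild_latticeZ2_ge 3 (n := a + 1 + d) (by omega)
    rwa [← lastChild_of_pos (by omega), ← Function.iterate_succ_apply] at this
  zify at hd hd' hL ⊢
  rcases le_or_gt r 0 with hr | hr
  · nlinarith [abs_nonneg (spiral a).1]
  · have ha : (2 * r - 1) ^ 2 ≤ a := spiralIndex_spiral a ▸ sq_le_spiralIndex hr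
    have : 4 * r - 1 ≤ d := by nlinarith
    have : 4 * r + 1 ≤ d' := by nlinarith
    linarith

theorem Psi_short_paths_general (i j : ℕ+)
    (hadj : latticeZ2.Adj (spiral ((i : ℕ) - 1)) (spiral ((j : ℕ) - 1))) :
    ∃ k : ℕ+, IsLeast {k' : ℕ+ | j ≤ k' ∧ liesOnPathFromOne i k'} k
      ∧ GcZ2.dist i k ≤ 4 := by
  have hj : (j : ℕ) ≤ (lastChild latticeZ2)^[4] i := by
    simpa only [Nat.sub_add_cancel i.pos, Nat.sub_add_cancel j.pos] using
      succ_le_iterate_lastChild_of_adj hadj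
  exact exists_isLeast_descendant_dist_le strictMono_lastChild_latticeZ2 hj

/-- **Lemma (`Ψ` maps edges to short paths).**  Identify `ℤ²` with `ℕ_{≥1}` via the
spiral labelling.  If `(i, j)` with `i < j` is an edge of the lattice graph, then the
smallest integer `k` with `k ≥ j` such that `i` lies on the path from `1` to `k` in the
universal comparison graph `G_c` satisfies `d_{G_c}(i, k) ≤ 4`; i.e. the path `Ψ(i,j)`
has length at most `4`. -/
theorem Psi_short_paths (i j : ℕ+) (hij : i < j)
    (hadj : latticeZ2.Adj (spiral ((i : ℕ) - 1)) (spiral ((j : ℕ) - 1))) :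
    ∃ k : ℕ+, IsLeast {k' : ℕ+ | j ≤ k' ∧ liesOnPathFromOne i k'} k
      ∧ GcZ2.dist i k ≤ 4 :=
  Psi_short_paths_general i j hadj
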